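/- arXiv:1112.5096 — 4 statements merged into one kernel-verified Lean document; each statement's English description precedes it below -/
import Mathlib

section
/- A function f : Z_p → Z_p is 1-Lipschitz if and only if it can be represented in the form f(∑_{i=0}^∞ χ_i p^i) = ∑_{i=0}^∞ ψ_i(χ_0,…,χ_i) p^i for suitable functions ψ_i : F_p^{i+1} → F_p, i.e., the i-th digit of f(x) depends only on the first i+1 digits of x. -/
/-- The `i`-th digit (in `{0,…,p-1}`, viewed in `ZMod p`) of the canonical
`p`-adic expansion of `x = ∑ χ_i p^i`. -/
noncomputable def padicDigit (p : ℕ) [Fact p.Prime] (x : ℤ_[p]) (i : ℕ) : ZMod p :=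
  ((x.appr (i + 1)) / p ^ i : ℕ)

section Aux

set_option linter.unusedSectionVars false

variable {p : ℕ} [hp : Fact p.Prime]

lemma appr_unique (x : ℤ_[p]) (n a : ℕ) (ha : a < p ^ n)
    (h : x - (a : ℤ_[p]) ∈ Ideal.span {(p : ℤ_[p]) ^ n}) : x.appr n = a := by
  have h1 := PadicInt.zmod_congr_of_sub_mem_span n x (x.appr n) a
    (PadicInt.appr_spec n x) h
  have h2 := (ZMod.natCast_eq_natCast_iff _ _ _).mp h1
  rwa [Nat.ModEq, Nat.mod_eq_of_lt (PadicInt.appr_lt x n), Nat.mod_eq_of_lt ha] at h2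

lemma span_sub_iff_appr_eq (x y : ℤ_[p]) (n : ℕ) :
    x - y ∈ Ideal.span {(p : ℤ_[p]) ^ n} ↔ x.appr n = y.appr n := by
  constructor
  · intro h
    refine appr_unique x n (y.appr n) (PadicInt.appr_lt y n) ?_
    have := Ideal.add_mem _ h (PadicInt.appr_spec n y)
    convert this using 1; ring
  · intro h
    have h1 := PadicInt.appr_spec n x
    have h2 := PadicInt.appr_spec n y
    have := Ideal.sub_mem _ h1 h2
    have e : x - y = x - (x.appr n : ℤ_[p]) - (y - (y.appr n : ℤ_[p])) := by
      rw [h]; ring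
    rwa [← e] at this

/-- digit of `x` via `appr n` for any `n > i`. -/
lemma padicDigit_eq_appr (x : ℤ_[p]) {i n : ℕ} (hin : i < n) :
    padicDigit p x i = ((x.appr n / p ^ i : ℕ) : ZMod p) := by
  obtain ⟨c, hc⟩ := PadicInt.dvd_appr_sub_appr x (i + 1) n hin
  have hmono : x.appr (i + 1) ≤ x.appr n := PadicInt.appr_mono x hin
  have hn : x.appr n = x.appr (i + 1) + p ^ i * (p * c) := by
    have h' : x.appr n = x.appr (i + 1) + p ^ (i + 1) * c := by omega
    rw [h', pow_succ, mul_assoc]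
  show ((x.appr (i + 1) / p ^ i : ℕ) : ZMod p) = _
  rw [hn, Nat.add_mul_div_left _ _ (pow_pos hp.1.pos i)]
  push_cast
  simp

lemma nat_digits_inj (hp1 : 1 < p) {n a b : ℕ} (ha : a < p ^ n) (hb : b < p ^ n)
    (h : ∀ i < n, a / p ^ i % p = b / p ^ i % p) : a = b := by
  induction n generalizing a b with
  | zero => simp at ha hb; omega
  | succ n ih =>
    have hp0 : 0 < p := by omega
    have h0 : a % p = b % p := by simpa using h 0 (Nat.succ_pos n)
    have ha' : a / p < p ^ n := Nat.div_lt_of_lt_mul (by rw [← pow_succ']; exact ha)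
    have hb' : b / p < p ^ n := Nat.div_lt_of_lt_mul (by rw [← pow_succ']; exact hb)
    have heq : a / p = b / p := by
      refine ih ha' hb' (fun i hi => ?_)
      have hh := h (i + 1) (by omega)
      rw [Nat.div_div_eq_div_mul, Nat.div_div_eq_div_mul, ← pow_succ']
      exact hh
    calc a = p * (a / p) + a % p := (Nat.div_add_mod a p).symm
    _ = p * (b / p) + b % p := by rw [heq, h0]
    _ = b := Nat.div_add_mod b p

lemma sum_digits (hp1 : 1 < p) : ∀ (n a : ℕ), a < p ^ n →
    ∑ j ∈ Finset.range n, a / p ^ j % p * p ^ j = a := by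
  intro n
  induction n with
  | zero =>
    intro a ha
    simp only [pow_zero, Nat.lt_one_iff] at ha
    simp [ha]
  | succ n ih =>
    intro a ha
    have hp0 : 0 < p := by omega
    have ha' : a / p < p ^ n := Nat.div_lt_of_lt_mul (by rw [← pow_succ']; exact ha)
    have key : ∀ j, a / p ^ (j + 1) % p * p ^ (j + 1) = p * (a / p / p ^ j % p * p ^ j) := by
      intro j
      rw [pow_succ', ← Nat.div_div_eq_div_mul]
      ring
    rw [Finset.sum_range_succ']
    simp only [key]
    rw [← Finset.mul_sum, ih (a / p) ha']
    have := Nat.div_add_mod a p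
    simpa using this

lemma span_sub_iff_digits (x y : ℤ_[p]) (n : ℕ) :
    x - y ∈ Ideal.span {(p : ℤ_[p]) ^ n} ↔ ∀ i < n, padicDigit p x i = padicDigit p y i := by
  rw [span_sub_iff_appr_eq]
  constructor
  · intro h i hi
    rw [padicDigit_eq_appr x hi, padicDigit_eq_appr y hi, h]
  · intro h
    refine nat_digits_inj hp.1.one_lt (PadicInt.appr_lt x n) (PadicInt.appr_lt y n) ?_
    intro i hi
    have hh := h i hi
    rw [padicDigit_eq_appr x hi, padicDigit_eq_appr y hi] at hh
    exact (ZMod.natCast_eq_natCast_iff _ _ _).mp hh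

lemma lipschitz_iff_span (f : ℤ_[p] → ℤ_[p]) :
    LipschitzWith 1 f ↔ ∀ (n : ℕ) (x y : ℤ_[p]),
      x - y ∈ Ideal.span {(p : ℤ_[p]) ^ n} → f x - f y ∈ Ideal.span {(p : ℤ_[p]) ^ n} := by
  rw [lipschitzWith_iff_dist_le_mul]
  simp only [NNReal.coe_one, one_mul, dist_eq_norm]
  constructor
  · intro H n x y h
    rw [← PadicInt.norm_le_pow_iff_mem_span_pow] at h ⊢
    exact le_trans (H x y) h
  · intro H x y
    by_cases hxy : x - y = 0
    · have hxy' : x = y := by rwa [sub_eq_zero] at hxy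
      simp [hxy']
    · set m := (x - y).valuation with hm
      have hv : ((m : ℤ)) = (x - y).valuation :=
        rfl
      have hnorm : ‖x - y‖ = (p : ℝ) ^ (-(m : ℤ)) := by
        rw [PadicInt.norm_eq_zpow_neg_valuation hxy]
      have hmem : x - y ∈ Ideal.span {(p : ℤ_[p]) ^ m} := by
        rw [← PadicInt.norm_le_pow_iff_mem_span_pow, hnorm]
      have hres := H m x y hmem
      rw [← PadicInt.norm_le_pow_iff_mem_span_pow] at hres
      rw [hnorm]; exact hres

end Aux

theorem stmt_6 (p : ℕ) [Fact p.Prime] (f : ℤ_[p] → ℤ_[p]) :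
    LipschitzWith 1 f ↔
      ∃ ψ : (i : ℕ) → (Fin (i + 1) → ZMod p) → ZMod p,
        ∀ x : ℤ_[p], ∀ i : ℕ,
          padicDigit p (f x) i = ψ i (fun j => padicDigit p x j) := by
  constructor
  · intro hf
    rw [lipschitz_iff_span] at hf
    refine ⟨fun i v =>
      padicDigit p (f ((∑ j : Fin (i + 1), (v j).val * p ^ (j : ℕ) : ℕ) : ℤ_[p])) i, ?_⟩
    intro x i
    set N : ℕ := ∑ j : Fin (i + 1), (padicDigit p x (j : ℕ)).val * p ^ (j : ℕ) with hN
    have hNe : N = x.appr (i + 1) := by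
      have hr : (∑ j : Fin (i + 1), (padicDigit p x (j : ℕ)).val * p ^ (j : ℕ)) =
          ∑ j ∈ Finset.range (i + 1), (padicDigit p x j).val * p ^ j :=
        Fin.sum_univ_eq_sum_range (fun j => (padicDigit p x j).val * p ^ j) (i + 1)
      rw [hN, hr]
      have hv : ∀ j < i + 1, (padicDigit p x j).val = x.appr (i + 1) / p ^ j % p := by
        intro j hj
        rw [padicDigit_eq_appr x hj, ZMod.val_natCast]
      rw [Finset.sum_congr rfl (fun j hj => by rw [hv j (Finset.mem_range.mp hj)])]
      exact sum_digits (Fact.out (p := p.Prime)).one_lt (i + 1) _ (PadicInt.appr_lt x (i + 1))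
    have hx : x - (N : ℤ_[p]) ∈ Ideal.span {(p : ℤ_[p]) ^ (i + 1)} := by
      rw [hNe]; exact PadicInt.appr_spec (i + 1) x
    have hfx := hf (i + 1) x (N : ℤ_[p]) hx
    exact (span_sub_iff_digits (f x) (f (N : ℤ_[p])) (i + 1)).mp hfx i (Nat.lt_succ_self i)
  · rintro ⟨ψ, hψ⟩
    rw [lipschitz_iff_span]
    intro n x y h
    rw [span_sub_iff_digits] at h ⊢
    intro i hi
    rw [hψ x i, hψ y i]
    congr 1
    funext j
    exact h j (lt_of_le_of_lt (Nat.lt_succ_iff.mp j.isLt) hi)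
end

section
/- The 2-adic odometer f(x) = x + 1 on Z_2 is ergodic with respect to the Haar probability measure: it preserves the measure, and any measurable set S with f^{−1}(S) = S has measure 0 or 1. -/
open MeasureTheory TopologicalSpace

theorem stmt_9 :
    letI : MeasurableSpace ℤ_[2] := borel ℤ_[2]
    haveI : BorelSpace ℤ_[2] := ⟨rfl⟩
    let μ : Measure ℤ_[2] := Measure.addHaarMeasure
      (⟨⟨Set.univ, isCompact_univ⟩, by simp⟩ : PositiveCompacts ℤ_[2])
    let f : ℤ_[2] → ℤ_[2] := fun x => x + 1
    MeasurePreserving f μ μ ∧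
      ∀ S : Set ℤ_[2], MeasurableSet S → f ⁻¹' S = S → μ S = 0 ∨ μ S = 1 := by
  letI : MeasurableSpace ℤ_[2] := borel ℤ_[2]
  haveI : BorelSpace ℤ_[2] := ⟨rfl⟩
  set K : PositiveCompacts ℤ_[2] := ⟨⟨Set.univ, isCompact_univ⟩, by simp⟩
  set μ : Measure ℤ_[2] := Measure.addHaarMeasure K with hμ
  have hdense : DenseRange (fun n : ℕ => n • (1 : ℤ_[2])) := by
    simpa using PadicInt.denseRange_natCast (p := 2)
  have herg : Ergodic (fun x : ℤ_[2] => (1 : ℤ_[2]) + x) μ :=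
    ergodic_add_left_of_denseRange_nsmul hdense μ
  have hf : (fun x : ℤ_[2] => x + 1) = fun x : ℤ_[2] => (1 : ℤ_[2]) + x := by
    funext x; exact add_comm x 1
  rw [hf]
  refine ⟨herg.toMeasurePreserving, fun S hS hSinv => ?_⟩
  have huniv : μ Set.univ = 1 := by
    exact MeasureTheory.Measure.addHaarMeasure_self (K₀ := K)
  rcases herg.measure_self_or_compl_eq_zero hS hSinv with h | h
  · exact Or.inl h
  · right
    have := measure_add_measure_compl (μ := μ) hS
    rw [h, add_zero, huniv] at this
    exact this
end

section
/- Let f : Z_p → Z_p be 1-Lipschitz and define E(f) ⊆ [0,1]² as the set of all points ((x mod p^k)/p^k, (f(x) mod p^k)/p^k) for x ∈ Z_p and k ≥ 1, and let 𝔈(f) be its closure in ℝ². Then the Lebesgue measure of 𝔈(f) is either 0 or 1; moreover, if the measure is nonzero then 𝔈(f) is the full unit square [0,1]², and if it is zero then 𝔈(f) is nowhere dense in [0,1]². -/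
open MeasureTheory Metric Set Pointwise
open scoped ENNReal

/-- The real plot of an automaton function `f : ℤ_[p] → ℤ_[p]`:
the set of points `((x mod p^k)/p^k, (f x mod p^k)/p^k)` in the unit square. -/
def autPlot (p : ℕ) [Fact p.Prime] (f : ℤ_[p] → ℤ_[p]) : Set (ℝ × ℝ) :=
  {q | ∃ x : ℤ_[p], ∃ k : ℕ, 1 ≤ k ∧
    q = ((x.appr k : ℝ) / (p : ℝ) ^ k, ((f x).appr k : ℝ) / (p : ℝ) ^ k)}

section
variable {p : ℕ} [hp : Fact p.Prime]

lemma appr_mod (x : ℤ_[p]) {k K : ℕ} (h : k ≤ K) : x.appr K % p ^ k = x.appr k := by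
  obtain ⟨c, hc⟩ := PadicInt.dvd_appr_sub_appr x k K h
  have hmono := PadicInt.appr_mono x h
  have hlt := PadicInt.appr_lt x k
  have : x.appr K = x.appr k + p ^ k * c := by omega
  rw [this, Nat.add_mul_mod_self_left, Nat.mod_eq_of_lt hlt]

variable (p) in
lemma plot_subset (f : ℤ_[p] → ℤ_[p]) :
    autPlot p f ⊆ Icc (0:ℝ) 1 ×ˢ Icc (0:ℝ) 1 := by
  rintro q ⟨x, k, hk, rfl⟩
  have hp1 : (1:ℝ) < p := by exact_mod_cast hp.out.one_lt
  have hpk : (0:ℝ) < (p:ℝ) ^ k := by positivity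
  have h1 : ((x.appr k : ℝ)) ≤ (p:ℝ) ^ k := by
    exact_mod_cast (PadicInt.appr_lt x k).le
  have h2 : (((f x).appr k : ℝ)) ≤ (p:ℝ) ^ k := by
    exact_mod_cast (PadicInt.appr_lt (f x) k).le
  constructor <;> constructor <;>
    first
      | positivity
      | { rw [div_le_one hpk]; assumption }

/-- the key self-similarity: the part of the plot inside an open grid square is
the image of the plot under the contraction onto that square. -/
lemma plot_selfsim (f : ℤ_[p] → ℤ_[p]) (m t τ : ℕ) :
    autPlot p f ∩ (Ioo ((t:ℝ)/(p:ℝ)^m) (((t:ℝ)+1)/(p:ℝ)^m) ×ˢ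
        Ioo ((τ:ℝ)/(p:ℝ)^m) (((τ:ℝ)+1)/(p:ℝ)^m)) ⊆
      (fun w : ℝ × ℝ => (((t:ℝ) + w.1)/(p:ℝ)^m, ((τ:ℝ) + w.2)/(p:ℝ)^m)) '' autPlot p f := by
  rintro q ⟨⟨x, K, hK, rfl⟩, hmem⟩
  have hp1 : (1:ℝ) < p := by exact_mod_cast hp.out.one_lt
  have hpPos : 0 < p := hp.out.pos
  obtain ⟨⟨hu1, hu2⟩, ⟨hv1, hv2⟩⟩ := hmem
  set a := x.appr K with ha
  set b := (f x).appr K with hb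
  -- convert the real inequalities to ℕ inequalities
  have hpm : (0:ℝ) < (p:ℝ) ^ m := by positivity
  have hpK : (0:ℝ) < (p:ℝ) ^ K := by positivity
  have h1 : t * p ^ K < a * p ^ m := by
    have := (div_lt_div_iff₀ hpm hpK).1 hu1
    exact_mod_cast this
  have h2 : a * p ^ m < (t+1) * p ^ K := by
    have := (div_lt_div_iff₀ hpK hpm).1 hu2
    exact_mod_cast this
  have h3 : τ * p ^ K < b * p ^ m := by
    have := (div_lt_div_iff₀ hpm hpK).1 hv1
    exact_mod_cast this
  have h4 : b * p ^ m < (τ+1) * p ^ K := by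
    have := (div_lt_div_iff₀ hpK hpm).1 hv2
    exact_mod_cast this
  -- m < K
  have hmK : m < K := by
    by_contra hc
    push_neg at hc
    have hdK : p ^ m = p ^ K * p ^ (m - K) := by
      rw [← pow_add]; congr 1; omega
    rw [hdK, ← mul_assoc] at h1 h2
    have hposK : 0 < p ^ K := pow_pos hpPos K
    have e1 : t < a * p ^ (m - K) := by
      have h1'' : t * p ^ K < a * p ^ (m-K) * p ^ K := by
        calc t * p^K < a * p^K * p^(m-K) := h1
          _ = a * p^(m-K) * p^K := by ring
      exact Nat.lt_of_mul_lt_mul_right h1''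
    have e2 : a * p ^ (m - K) < t + 1 := by
      have : a * p^(m-K) * p^K < (t+1) * p^K := by
        calc a * p^(m-K) * p^K = a * p^K * p^(m-K) := by ring
          _ < (t+1) * p^K := h2
      exact Nat.lt_of_mul_lt_mul_right this
    omega
  set k := K - m with hk'
  have hKk : K = k + m := by omega
  have hk1 : 1 ≤ k := by omega
  have hkm : k + m = K := by omega
  have hsplit : p ^ K = p ^ k * p ^ m := by rw [← pow_add, hkm]
  -- t * p^k < a < (t+1) * p^k
  have h1' : t * p ^ k < a := by
    have : t * (p^k * p^m) < a * p^m := by rwa [hsplit] at h1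
    have := Nat.lt_of_mul_lt_mul_right (by calc t * p^k * p^m = t * (p^k*p^m) := by ring
      _ < a * p^m := this)
    exact this
  have h2' : a < (t+1) * p ^ k := by
    have : a * p^m < (t+1) * (p^k * p^m) := by rwa [hsplit] at h2
    exact Nat.lt_of_mul_lt_mul_right (by calc a * p^m < (t+1)*(p^k*p^m) := this
      _ = (t+1)*p^k * p^m := by ring)
  have h3' : τ * p ^ k < b := by
    have : τ * (p^k * p^m) < b * p^m := by rwa [hsplit] at h3
    exact Nat.lt_of_mul_lt_mul_right (by calc τ * p^k * p^m = τ * (p^k*p^m) := by ring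
      _ < b * p^m := this)
  have h4' : b < (τ+1) * p ^ k := by
    have : b * p^m < (τ+1) * (p^k * p^m) := by rwa [hsplit] at h4
    exact Nat.lt_of_mul_lt_mul_right (by calc b * p^m < (τ+1)*(p^k*p^m) := this
      _ = (τ+1)*p^k * p^m := by ring)
  -- decompose a and b
  have hadiv : a / p ^ k = t := Nat.div_eq_of_lt_le h1'.le (by simpa [Nat.succ_eq_add_one] using h2')
  have hbdiv : b / p ^ k = τ := Nat.div_eq_of_lt_le h3'.le (by simpa [Nat.succ_eq_add_one] using h4')
  have hamod : a % p ^ k = x.appr k := appr_mod x (by omega)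
  have hbmod : b % p ^ k = (f x).appr k := appr_mod (f x) (by omega)
  have haeq : a = t * p ^ k + x.appr k := by
    conv_lhs => rw [← Nat.div_add_mod a (p ^ k)]
    rw [hadiv, hamod]; ring
  have hbeq : b = τ * p ^ k + (f x).appr k := by
    conv_lhs => rw [← Nat.div_add_mod b (p ^ k)]
    rw [hbdiv, hbmod]; ring
  refine ⟨((x.appr k : ℝ)/(p:ℝ)^k, (((f x).appr k : ℝ))/(p:ℝ)^k), ⟨x, k, hk1, rfl⟩, ?_⟩
  have hpk : (0:ℝ) < (p:ℝ) ^ k := by positivity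
  have hsplitR : (p:ℝ) ^ K = (p:ℝ) ^ k * (p:ℝ) ^ m := by
    rw [← pow_add, hkm]
  have haR : (a:ℝ) = t * (p:ℝ)^k + x.appr k := by exact_mod_cast congrArg (Nat.cast : ℕ → ℝ) haeq
  have hbR : (b:ℝ) = τ * (p:ℝ)^k + (f x).appr k := by exact_mod_cast congrArg (Nat.cast : ℕ → ℝ) hbeq
  have key : ∀ (c r : ℝ), ((c + r/(p:ℝ)^k)/(p:ℝ)^m) = (c * (p:ℝ)^k + r) / (p:ℝ)^K := by
    intro c r
    rw [hsplitR]
    field_simp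
  simp only [Prod.mk.injEq]
  constructor
  · rw [key, haR]
  · rw [key, hbR]

end

noncomputable section

/-- open grid square -/
def osq (p m t τ : ℕ) : Set (ℝ × ℝ) :=
  Ioo ((t:ℝ)/(p:ℝ)^m) (((t:ℝ)+1)/(p:ℝ)^m) ×ˢ Ioo ((τ:ℝ)/(p:ℝ)^m) (((τ:ℝ)+1)/(p:ℝ)^m)

/-- closed grid square -/
def csq (p m t τ : ℕ) : Set (ℝ × ℝ) :=
  Icc ((t:ℝ)/(p:ℝ)^m) (((t:ℝ)+1)/(p:ℝ)^m) ×ˢ Icc ((τ:ℝ)/(p:ℝ)^m) (((τ:ℝ)+1)/(p:ℝ)^m)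

variable {p : ℕ} [hp : Fact p.Prime]

lemma ppow_pos (m : ℕ) : (0:ℝ) < (p:ℝ)^m := by
  have : (0:ℝ) < (p:ℝ) := by exact_mod_cast hp.out.pos
  positivity

lemma interval_len (m t : ℕ) : ((t:ℝ)+1)/(p:ℝ)^m - (t:ℝ)/(p:ℝ)^m = ((p:ℝ)^m)⁻¹ := by
  have := ppow_pos (p := p) m
  field_simp
  ring

lemma volume_osq (m t τ : ℕ) :
    volume (osq p m t τ) =
      ENNReal.ofReal ((p:ℝ)^m)⁻¹ * ENNReal.ofReal ((p:ℝ)^m)⁻¹ := by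
  rw [osq, Measure.volume_eq_prod, Measure.prod_prod, Real.volume_Ioo, Real.volume_Ioo,
    interval_len, interval_len]

lemma volume_csq (m t τ : ℕ) :
    volume (csq p m t τ) =
      ENNReal.ofReal ((p:ℝ)^m)⁻¹ * ENNReal.ofReal ((p:ℝ)^m)⁻¹ := by
  rw [csq, Measure.volume_eq_prod, Measure.prod_prod, Real.volume_Icc, Real.volume_Icc,
    interval_len, interval_len]

lemma osq_subset_csq (m t τ : ℕ) : osq p m t τ ⊆ csq p m t τ :=
  Set.prod_mono Ioo_subset_Icc_self Ioo_subset_Icc_self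

lemma csq_subset_unit {m t τ : ℕ} (ht : t < p^m) (hτ : τ < p^m) :
    csq p m t τ ⊆ Icc (0:ℝ) 1 ×ˢ Icc (0:ℝ) 1 := by
  have hpm := ppow_pos (p := p) m
  apply Set.prod_mono <;> apply Icc_subset_Icc <;>
  · first
    | { apply div_nonneg (by positivity) hpm.le }
    | { rw [div_le_one hpm]
        have : (t:ℝ) + 1 ≤ (p:ℝ)^m := by exact_mod_cast Nat.succ_le_of_lt ht
        try exact this
        try { have : (τ:ℝ) + 1 ≤ (p:ℝ)^m := by exact_mod_cast Nat.succ_le_of_lt hτ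
              exact this } }

lemma csq_subset_closedBall {m t τ : ℕ} {z : ℝ × ℝ} (hz : z ∈ csq p m t τ) :
    csq p m t τ ⊆ closedBall z ((p:ℝ)^m)⁻¹ := by
  intro w hw
  obtain ⟨⟨hz1, hz2⟩, ⟨hz3, hz4⟩⟩ := hz
  obtain ⟨⟨hw1, hw2⟩, ⟨hw3, hw4⟩⟩ := hw
  have hlen := interval_len (p := p) m t
  have hlen' := interval_len (p := p) m τ
  rw [mem_closedBall, Prod.dist_eq, max_le_iff, Real.dist_eq, Real.dist_eq]
  constructor <;> rw [abs_le] <;> constructor <;> linarith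

/-- every point of the unit interval lies in some level-`m` cell -/
lemma exists_cell {u : ℝ} (h0 : 0 ≤ u) (h1 : u ≤ 1) (m : ℕ) :
    ∃ t : ℕ, t < p^m ∧ (t:ℝ)/(p:ℝ)^m ≤ u ∧ u ≤ ((t:ℝ)+1)/(p:ℝ)^m := by
  have hpm := ppow_pos (p := p) m
  have hpm' : 0 < p ^ m := pow_pos hp.out.pos m
  by_cases hc : ⌊u * (p:ℝ)^m⌋₊ < p ^ m
  · refine ⟨⌊u * (p:ℝ)^m⌋₊, hc, ?_, ?_⟩
    · rw [div_le_iff₀ hpm]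
      exact Nat.floor_le (by positivity)
    · rw [le_div_iff₀ hpm]
      exact (Nat.lt_floor_add_one _).le
  · push_neg at hc
    have hu1 : (p:ℝ)^m ≤ u * (p:ℝ)^m := by
      calc ((p:ℝ)^m) = ((p^m : ℕ) : ℝ) := by push_cast; ring
        _ ≤ _ := by
          apply (Nat.cast_le.2 hc).trans
          exact Nat.floor_le (by positivity)
    have hu : u = 1 := le_antisymm h1 (by nlinarith)
    have hcast : ((p^m - 1 : ℕ) : ℝ) = (p:ℝ)^m - 1 := by
      have h1' : (1:ℕ) ≤ p^m := hpm'
      push_cast [h1']; ring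
    refine ⟨p^m - 1, by omega, ?_, ?_⟩
    · rw [hcast, hu, div_le_one hpm]; linarith
    · rw [hcast, hu, le_div_iff₀ hpm]; ring_nf; rfl

/-- the contraction onto grid cell `(m,t,τ)` -/
def homTT (p m t τ : ℕ) : ℝ × ℝ → ℝ × ℝ :=
  fun w => (((t:ℝ) + w.1)/(p:ℝ)^m, ((τ:ℝ) + w.2)/(p:ℝ)^m)

lemma homTT_image (m t τ : ℕ) (s : Set (ℝ × ℝ)) :
    homTT p m t τ '' s =
      (((t:ℝ)/(p:ℝ)^m, (τ:ℝ)/(p:ℝ)^m) : ℝ × ℝ) +ᵥ (((p:ℝ)^m)⁻¹ • s) := by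
  have hpm := ppow_pos (p := p) m
  rw [← Set.image_vadd, ← Set.image_smul, ← Set.image_comp]
  apply Set.image_congr
  intro w _
  show homTT p m t τ w = (((t:ℝ)/(p:ℝ)^m, (τ:ℝ)/(p:ℝ)^m) : ℝ × ℝ) +ᵥ (((p:ℝ)^m)⁻¹ • w)
  have h1 : ((p:ℝ)^m)⁻¹ • w = (((p:ℝ)^m)⁻¹ * w.1, ((p:ℝ)^m)⁻¹ * w.2) := rfl
  rw [h1, homTT]
  show _ = (((t:ℝ)/(p:ℝ)^m, (τ:ℝ)/(p:ℝ)^m) : ℝ × ℝ) + _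
  rw [Prod.mk_add_mk, Prod.mk.injEq]
  constructor <;> field_simp

lemma volume_homTT_image (m t τ : ℕ) (s : Set (ℝ × ℝ)) :
    volume (homTT p m t τ '' s) =
      ENNReal.ofReal ((p:ℝ)^m)⁻¹ * ENNReal.ofReal ((p:ℝ)^m)⁻¹ * volume s := by
  have hpm := ppow_pos (p := p) m
  rw [homTT_image, measure_vadd, Measure.addHaar_smul_of_nonneg volume (by positivity) s]
  have h2 : Module.finrank ℝ (ℝ × ℝ) = 2 := by simp
  rw [h2, sq, ENNReal.ofReal_mul (by positivity)]

lemma closure_plot_subset (f : ℤ_[p] → ℤ_[p]) :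
    closure (autPlot p f) ⊆ Icc (0:ℝ) 1 ×ˢ Icc (0:ℝ) 1 :=
  closure_minimal (plot_subset p f) ((isClosed_Icc).prod isClosed_Icc)

lemma isCompact_closure_plot (f : ℤ_[p] → ℤ_[p]) : IsCompact (closure (autPlot p f)) :=
  IsCompact.of_isClosed_subset ((isCompact_Icc).prod isCompact_Icc) isClosed_closure
    (closure_plot_subset f)

lemma continuous_homTT (m t τ : ℕ) : Continuous (homTT p m t τ) := by
  unfold homTT; fun_prop

lemma closure_selfsim (f : ℤ_[p] → ℤ_[p]) (m t τ : ℕ) :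
    closure (autPlot p f) ∩ osq p m t τ ⊆ homTT p m t τ '' closure (autPlot p f) := by
  have hopen : IsOpen (osq p m t τ) := (isOpen_Ioo).prod isOpen_Ioo
  have hsub : autPlot p f ∩ osq p m t τ ⊆ homTT p m t τ '' closure (autPlot p f) := by
    refine (plot_selfsim f m t τ).trans ?_
    exact Set.image_mono subset_closure
  have hclosed : IsClosed (homTT p m t τ '' closure (autPlot p f)) :=
    ((isCompact_closure_plot f).image (continuous_homTT m t τ)).isClosed
  intro z hz
  have : z ∈ closure (autPlot p f ∩ osq p m t τ) := by
    rw [Set.inter_comm] at hz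
    rw [Set.inter_comm]
    exact hopen.inter_closure hz
  exact hclosed.closure_subset ((closure_mono hsub) this)

lemma volume_inter_osq_le (f : ℤ_[p] → ℤ_[p]) (m t τ : ℕ) :
    volume (closure (autPlot p f) ∩ osq p m t τ) ≤
      ENNReal.ofReal ((p:ℝ)^m)⁻¹ * ENNReal.ofReal ((p:ℝ)^m)⁻¹ * volume (closure (autPlot p f)) :=
  (measure_mono (closure_selfsim f m t τ)).trans (volume_homTT_image m t τ _).le

lemma volume_unit : volume (Icc (0:ℝ) 1 ×ˢ Icc (0:ℝ) 1) = 1 := by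
  rw [Measure.volume_eq_prod, Measure.prod_prod, Real.volume_Icc]
  norm_num

lemma exists_pow_inv_lt {ε : ℝ} (hε : 0 < ε) : ∃ m : ℕ, ((p:ℝ)^m)⁻¹ < ε := by
  have hp1 : (1:ℝ) < p := by exact_mod_cast hp.out.one_lt
  obtain ⟨m, hm⟩ := pow_unbounded_of_one_lt ε⁻¹ hp1
  exact ⟨m, by
    rw [inv_lt_comm₀ (ppow_pos m) hε] at *
    exact hm⟩

lemma closure_eq_unit_of_volume_one (f : ℤ_[p] → ℤ_[p])
    (h1 : volume (closure (autPlot p f)) = 1) :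
    closure (autPlot p f) = Icc (0:ℝ) 1 ×ˢ Icc (0:ℝ) 1 := by
  set C := closure (autPlot p f) with hCdef
  have hCc : IsClosed C := isClosed_closure
  apply subset_antisymm (closure_plot_subset f)
  intro z hz
  rw [← hCdef, ← hCc.closure_eq, Metric.mem_closure_iff]
  intro ε hε
  obtain ⟨m, hm⟩ := exists_pow_inv_lt (p := p) hε
  obtain ⟨t, ht, ht1, ht2⟩ := exists_cell (p := p) hz.1.1 hz.1.2 m
  obtain ⟨τ, hτ, hτ1, hτ2⟩ := exists_cell (p := p) hz.2.1 hz.2.2 m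
  have hzc : z ∈ csq p m t τ := ⟨⟨ht1, ht2⟩, ⟨hτ1, hτ2⟩⟩
  have hmeas : MeasurableSet C := hCc.measurableSet
  have hSC : volume ((Icc (0:ℝ) 1 ×ˢ Icc (0:ℝ) 1) \ C) = 0 := by
    rw [measure_diff (closure_plot_subset f) hmeas.nullMeasurableSet
      (by rw [h1]; exact ENNReal.one_ne_top), volume_unit, h1, tsub_self]
  have hpos : volume (C ∩ osq p m t τ) ≠ 0 := by
    intro h0
    have hsub : osq p m t τ ⊆ (C ∩ osq p m t τ) ∪ ((Icc (0:ℝ) 1 ×ˢ Icc (0:ℝ) 1) \ C) := by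
      intro w hw
      by_cases hwC : w ∈ C
      · exact Or.inl ⟨hwC, hw⟩
      · exact Or.inr ⟨csq_subset_unit ht hτ (osq_subset_csq m t τ hw), hwC⟩
    have hle : volume (osq p m t τ) ≤ 0 := by
      calc volume (osq p m t τ) ≤ _ := measure_mono hsub
        _ ≤ volume (C ∩ osq p m t τ) + volume ((Icc (0:ℝ) 1 ×ˢ Icc (0:ℝ) 1) \ C) :=
            measure_union_le _ _
        _ = 0 := by rw [h0, hSC, add_zero]
    rw [volume_osq] at hle
    have hq : (0:ℝ≥0∞) < ENNReal.ofReal ((p:ℝ)^m)⁻¹ :=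
      ENNReal.ofReal_pos.2 (by
        have := ppow_pos (p := p) m; positivity)
    exact absurd hle (by simpa using (ENNReal.mul_pos hq.ne' hq.ne').ne')
  obtain ⟨w, hwC, hwsq⟩ := nonempty_of_measure_ne_zero hpos
  refine ⟨w, hwC, ?_⟩
  have hwcs : w ∈ csq p m t τ := osq_subset_csq m t τ hwsq
  have hd : w ∈ closedBall z ((p:ℝ)^m)⁻¹ := csq_subset_closedBall hzc hwcs
  calc dist z w = dist w z := dist_comm _ _
    _ ≤ ((p:ℝ)^m)⁻¹ := hd
    _ < ε := hm

lemma nowhereDense_of_volume_zero (f : ℤ_[p] → ℤ_[p])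
    (h0 : volume (closure (autPlot p f)) = 0) :
    IsNowhereDense (Subtype.val ⁻¹' closure (autPlot p f) :
      Set ↥(Icc (0:ℝ) 1 ×ˢ Icc (0:ℝ) 1)) := by
  set C := closure (autPlot p f) with hCdef
  set S := Icc (0:ℝ) 1 ×ˢ Icc (0:ℝ) 1 with hSdef
  have hclosed : IsClosed (Subtype.val ⁻¹' C : Set ↥S) :=
    isClosed_closure.preimage continuous_subtype_val
  rw [IsNowhereDense, hclosed.closure_eq]
  rw [eq_empty_iff_forall_notMem]
  intro z hz
  rw [mem_interior_iff_mem_nhds, Metric.mem_nhds_iff] at hz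
  obtain ⟨ε, hε, hball⟩ := hz
  obtain ⟨m, hm⟩ := exists_pow_inv_lt (p := p) hε
  have hzS : (z : ℝ × ℝ) ∈ S := z.2
  obtain ⟨t, ht, ht1, ht2⟩ := exists_cell (p := p) hzS.1.1 hzS.1.2 m
  obtain ⟨τ, hτ, hτ1, hτ2⟩ := exists_cell (p := p) hzS.2.1 hzS.2.2 m
  have hzc : (z : ℝ × ℝ) ∈ csq p m t τ := ⟨⟨ht1, ht2⟩, ⟨hτ1, hτ2⟩⟩
  have hsubC : csq p m t τ ⊆ C := by
    intro w hw
    have hwS : w ∈ S := csq_subset_unit ht hτ hw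
    have hdist : dist (⟨w, hwS⟩ : ↥S) z < ε := by
      rw [Subtype.dist_eq]
      calc dist w (z : ℝ × ℝ) ≤ ((p:ℝ)^m)⁻¹ := csq_subset_closedBall hzc hw
        _ < ε := hm
    have : (⟨w, hwS⟩ : ↥S) ∈ Subtype.val ⁻¹' C := hball hdist
    exact this
  have : volume (csq p m t τ) ≤ 0 := h0 ▸ measure_mono hsubC
  rw [volume_csq] at this
  have hq : (0:ℝ≥0∞) < ENNReal.ofReal ((p:ℝ)^m)⁻¹ :=
    ENNReal.ofReal_pos.2 (by have := ppow_pos (p := p) m; positivity)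
  exact absurd this (by simpa using (ENNReal.mul_pos hq.ne' hq.ne').ne')

lemma volume_closedBall_prod (z : ℝ × ℝ) {r : ℝ} (hr : 0 ≤ r) :
    volume (closedBall z r) = ENNReal.ofReal (2*r) * ENNReal.ofReal (2*r) := by
  have hz : z = (z.1, z.2) := rfl
  rw [hz, ← closedBall_prod_same, Measure.volume_eq_prod, Measure.prod_prod,
    Real.closedBall_eq_Icc, Real.closedBall_eq_Icc, Real.volume_Icc, Real.volume_Icc]
  have e1 : z.1 + r - (z.1 - r) = 2*r := by ring
  have e2 : z.2 + r - (z.2 - r) = 2*r := by ring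
  rw [e1, e2]

lemma exists_cell_strict {u : ℝ} (h0 : 0 ≤ u) (h1 : u ≤ 1)
    (hirr : ∀ q : ℚ, u ≠ (q:ℝ)) (m : ℕ) :
    ∃ t : ℕ, t < p^m ∧ (t:ℝ)/(p:ℝ)^m < u ∧ u < ((t:ℝ)+1)/(p:ℝ)^m := by
  obtain ⟨t, ht, ht1, ht2⟩ := exists_cell (p := p) h0 h1 m
  refine ⟨t, ht, lt_of_le_of_ne ht1 ?_, lt_of_le_of_ne ht2 ?_⟩
  · intro h
    exact hirr ((t:ℚ)/(p:ℚ)^m) (by rw [← h]; push_cast; ring)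
  · intro h
    exact hirr (((t:ℚ)+1)/(p:ℚ)^m) (by rw [h]; push_cast; ring)

lemma volume_closure_eq_one (f : ℤ_[p] → ℤ_[p])
    (hne : volume (closure (autPlot p f)) ≠ 0) :
    volume (closure (autPlot p f)) = 1 := by
  classical
  set C := closure (autPlot p f) with hCdef
  have hCc : IsClosed C := isClosed_closure
  have hmeas : MeasurableSet C := hCc.measurableSet
  have hCS : C ⊆ Icc (0:ℝ) 1 ×ˢ Icc (0:ℝ) 1 := closure_plot_subset f
  have hle1 : volume C ≤ 1 := by
    calc volume C ≤ volume (Icc (0:ℝ) 1 ×ˢ Icc (0:ℝ) 1) := measure_mono hCS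
      _ = 1 := volume_unit
  have hfin : volume C ≠ ⊤ := (hle1.trans_lt ENNReal.one_lt_top).ne
  by_contra hne1
  have hlt1 : volume C < 1 := lt_of_le_of_ne hle1 hne1
  set a0 := (volume C).toReal with ha0
  have ha00 : 0 ≤ a0 := ENNReal.toReal_nonneg
  have ha01 : a0 < 1 := by
    rw [ha0, ← ENNReal.toReal_one]
    exact ENNReal.toReal_strict_mono ENNReal.one_ne_top hlt1
  -- the set of points with a rational coordinate has measure zero
  set N : Set (ℝ × ℝ) := {w | ∃ q : ℚ, w.1 = (q:ℝ) ∨ w.2 = (q:ℝ)} with hNdef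
  have hNnull : volume N = 0 := by
    have hsub : N ⊆ ⋃ q : ℚ, (({((q:ℝ))} : Set ℝ) ×ˢ (univ : Set ℝ) ∪
        (univ : Set ℝ) ×ˢ ({((q:ℝ))} : Set ℝ)) := by
      rintro w ⟨q, hq | hq⟩
      · exact mem_iUnion.2 ⟨q, Or.inl ⟨hq, trivial⟩⟩
      · exact mem_iUnion.2 ⟨q, Or.inr ⟨trivial, hq⟩⟩
    refine measure_mono_null hsub (measure_iUnion_null fun q => measure_union_null ?_ ?_)
    · rw [Measure.volume_eq_prod, Measure.prod_prod]; simp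
    · rw [Measure.volume_eq_prod, Measure.prod_prod]; simp
  -- pick a Lebesgue density point of C avoiding rational lines
  have hres : volume.restrict C ≠ 0 := by
    exact fun h => hne (Measure.restrict_eq_zero.1 h)
  haveI : (ae (volume.restrict C)).NeBot := ae_neBot.2 hres
  have h1 := Besicovitch.ae_tendsto_measure_inter_div volume C
  have h2 : ∀ᵐ z ∂(volume.restrict C), z ∈ C := ae_restrict_mem hmeas
  have h3 : ∀ᵐ z ∂(volume.restrict C), z ∉ N := by
    rw [← measure_eq_zero_iff_ae_notMem]
    exact le_antisymm (le_trans (Measure.restrict_le_self N) hNnull.le) (zero_le)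
  obtain ⟨z, hzT, hzC, hzN⟩ := (h1.and (h2.and h3)).exists
  -- set up the contradiction
  set ε : ℝ := (1 - a0)/8 with hεdef
  have hε : 0 < ε := by rw [hεdef]; linarith
  have hε1 : ε ≤ 1 := by rw [hεdef]; linarith
  have hc1 : ENNReal.ofReal (1 - ε) < 1 := by
    rw [← ENNReal.ofReal_one]
    exact ENNReal.ofReal_lt_ofReal_iff one_pos |>.2 (by linarith)
  have hev : ∀ᶠ r in nhdsWithin (0:ℝ) (Set.Ioi 0),
      ENNReal.ofReal (1 - ε) < volume (C ∩ closedBall z r) / volume (closedBall z r) :=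
    hzT.eventually (eventually_gt_nhds hc1)
  have hp1 : (1:ℝ) < p := by exact_mod_cast hp.out.one_lt
  have hseq : Filter.Tendsto (fun m : ℕ => ((p:ℝ)^m)⁻¹) Filter.atTop
      (nhdsWithin (0:ℝ) (Set.Ioi 0)) := by
    apply tendsto_nhdsWithin_of_tendsto_nhds_of_eventually_within
    · have : (fun m : ℕ => ((p:ℝ)^m)⁻¹) = fun m : ℕ => ((p:ℝ)⁻¹)^m := by
        funext m; rw [inv_pow]
      rw [this]
      exact tendsto_pow_atTop_nhds_zero_of_lt_one (by positivity)
        (inv_lt_one_of_one_lt₀ hp1)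
    · filter_upwards with m
      exact inv_pos.2 (ppow_pos m)
  obtain ⟨m, hm⟩ := (hseq.eventually hev).exists
  -- the grid cell around z at level m
  set r : ℝ := ((p:ℝ)^m)⁻¹ with hrdef
  have hr0 : 0 < r := inv_pos.2 (ppow_pos m)
  set q : ℝ≥0∞ := ENNReal.ofReal r with hqdef
  have hq0 : q ≠ 0 := (ENNReal.ofReal_pos.2 hr0).ne'
  have hqt : q ≠ ⊤ := ENNReal.ofReal_ne_top
  have hzS : z ∈ Icc (0:ℝ) 1 ×ˢ Icc (0:ℝ) 1 := hCS hzC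
  have hz1irr : ∀ qq : ℚ, z.1 ≠ (qq:ℝ) := fun qq h => hzN ⟨qq, Or.inl h⟩
  have hz2irr : ∀ qq : ℚ, z.2 ≠ (qq:ℝ) := fun qq h => hzN ⟨qq, Or.inr h⟩
  obtain ⟨t, ht, ht1, ht2⟩ := exists_cell_strict (p := p) hzS.1.1 hzS.1.2 hz1irr m
  obtain ⟨τ, hτ, hτ1, hτ2⟩ := exists_cell_strict (p := p) hzS.2.1 hzS.2.2 hz2irr m
  have hzc : z ∈ csq p m t τ := ⟨⟨ht1.le, ht2.le⟩, ⟨hτ1.le, hτ2.le⟩⟩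
  set B := closedBall z r with hBdef
  have hvolB : volume B = (2*q) * (2*q) := by
    rw [hBdef, volume_closedBall_prod z hr0.le, hqdef,
      ENNReal.ofReal_mul (by norm_num : (0:ℝ) ≤ 2)]
    norm_num
  have h2q0 : (2:ℝ≥0∞) * q ≠ 0 := mul_ne_zero (by norm_num) hq0
  have hB0 : volume B ≠ 0 := by
    rw [hvolB]; exact mul_ne_zero h2q0 h2q0
  have hBt : volume B ≠ ⊤ := by
    rw [hvolB]
    exact ENNReal.mul_ne_top (ENNReal.mul_ne_top (by norm_num) hqt) (ENNReal.mul_ne_top (by norm_num) hqt)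
  have hlow : ENNReal.ofReal (1 - ε) * volume B < volume (C ∩ B) := by
    have := hm
    rwa [ENNReal.lt_div_iff_mul_lt (Or.inl hB0) (Or.inl hBt)] at this
  have hsubB : osq p m t τ ⊆ B :=
    (osq_subset_csq m t τ).trans (csq_subset_closedBall hzc)
  have hsplit : volume (C ∩ B) ≤ volume (C ∩ osq p m t τ) + volume (B \ osq p m t τ) := by
    refine (measure_mono ?_).trans (measure_union_le _ _)
    rintro w ⟨hwC, hwB⟩
    by_cases hwo : w ∈ osq p m t τ
    · exact Or.inl ⟨hwC, hwo⟩
    · exact Or.inr ⟨hwB, hwo⟩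
  have hosqmeas : MeasurableSet (osq p m t τ) := (measurableSet_Ioo).prod measurableSet_Ioo
  have hvolosq : volume (osq p m t τ) = q * q := by rw [volume_osq, hqdef]
  have hdiff : volume (B \ osq p m t τ) = volume B - q * q := by
    rw [measure_diff hsubB hosqmeas.nullMeasurableSet (by rw [hvolosq]; exact ENNReal.mul_ne_top hqt hqt), hvolosq]
  have hselfsim : volume (C ∩ osq p m t τ) ≤ q * q * volume C := by
    have := volume_inter_osq_le f m t τ
    rwa [← hCdef, ← hqdef] at this
  -- assemble the inequality
  have hBQ : volume B = 4 * (q*q) := by rw [hvolB]; ring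
  have hsub4 : volume B - q*q = 3 * (q*q) := by
    rw [hBQ, show (4:ℝ≥0∞) * (q*q) = 3*(q*q) + q*q by ring,
      ENNReal.add_sub_cancel_right (ENNReal.mul_ne_top hqt hqt)]
  have hchain : ENNReal.ofReal (1 - ε) * 4 * (q*q) < (volume C + 3) * (q*q) := by
    calc ENNReal.ofReal (1 - ε) * 4 * (q*q) = ENNReal.ofReal (1 - ε) * (4 * (q*q)) := by ring
      _ = ENNReal.ofReal (1 - ε) * volume B := by rw [hBQ]
      _ < volume (C ∩ B) := hlow
      _ ≤ volume (C ∩ osq p m t τ) + volume (B \ osq p m t τ) := hsplit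
      _ ≤ q * q * volume C + (volume B - q*q) := add_le_add hselfsim hdiff.le
      _ = (volume C + 3) * (q*q) := by rw [hsub4]; ring
  have hQt : q * q ≠ ⊤ := ENNReal.mul_ne_top hqt hqt
  have hQ0 : q * q ≠ 0 := mul_ne_zero hq0 hq0
  have hfinal : ENNReal.ofReal (1 - ε) * 4 < volume C + 3 :=
    (ENNReal.mul_left_strictMono hQ0 hQt).lt_iff_lt.1 hchain
  -- convert to reals
  have hCof : volume C = ENNReal.ofReal a0 := by
    rw [ha0, ENNReal.ofReal_toReal hfin]
  have h4 : ENNReal.ofReal (1 - ε) * 4 = ENNReal.ofReal ((1-ε)*4) := by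
    rw [ENNReal.ofReal_mul (by linarith)]
    norm_num
  have h3' : volume C + 3 = ENNReal.ofReal (a0 + 3) := by
    rw [hCof, ENNReal.ofReal_add ha00 (by norm_num : (0:ℝ) ≤ 3)]
    norm_num
  rw [h4, h3'] at hfinal
  have : (1-ε)*4 < a0 + 3 := by
    have := (ENNReal.ofReal_lt_ofReal_iff (by linarith)).1 hfinal
    exact this
  rw [hεdef] at this
  linarith


theorem stmt_16 (p : ℕ) [Fact p.Prime] (f : ℤ_[p] → ℤ_[p])
    (hf : LipschitzWith 1 f) :
    (volume (closure (autPlot p f)) = 0 ∨ volume (closure (autPlot p f)) = 1) ∧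
      (volume (closure (autPlot p f)) ≠ 0 →
        closure (autPlot p f) = Set.Icc (0 : ℝ) 1 ×ˢ Set.Icc (0 : ℝ) 1) ∧
      (volume (closure (autPlot p f)) = 0 →
        IsNowhereDense
          (Subtype.val ⁻¹' closure (autPlot p f) :
            Set ↥(Set.Icc (0 : ℝ) 1 ×ˢ Set.Icc (0 : ℝ) 1))) := by
  have hfull : volume (closure (autPlot p f)) ≠ 0 →
      closure (autPlot p f) = Set.Icc (0 : ℝ) 1 ×ˢ Set.Icc (0 : ℝ) 1 := fun hne =>
    closure_eq_unit_of_volume_one f (volume_closure_eq_one f hne)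
  refine ⟨?_, hfull, nowhereDense_of_volume_zero f⟩
  by_cases h0 : volume (closure (autPlot p f)) = 0
  · exact Or.inl h0
  · exact Or.inr (volume_closure_eq_one f h0)
end
end

section
/- Let f : Z_p → Z_p be 1-Lipschitz and E(f) ⊆ [0,1]² the set of points ((x mod p^k)/p^k, (f(x) mod p^k)/p^k) over x ∈ Z_p, k ≥ 1. If some closed square [u,v] × [u′,v′] with u < v, u′ < v′ is contained in the closure of E(f), then the closure of E(f) is all of [0,1]². -/
/-- An integer is at distance at least `min s₁ (1-s₁)` from `a + s₁`. -/
lemma near_int (a m : ℤ) (s₁ : ℝ) (h0 : 0 < s₁) (h1 : s₁ < 1) :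
    min s₁ (1 - s₁) ≤ |(m : ℝ) - ((a : ℝ) + s₁)| := by
  rcases le_or_gt m a with h | h
  · have hm : (m : ℝ) ≤ a := by exact_mod_cast h
    have : (a : ℝ) + s₁ - m ≤ |(m : ℝ) - ((a : ℝ) + s₁)| := by
      rw [abs_sub_comm]; exact le_abs_self _
    have := min_le_left s₁ (1 - s₁)
    linarith
  · have hm : (a : ℝ) + 1 ≤ m := by exact_mod_cast h
    have : (m : ℝ) - ((a : ℝ) + s₁) ≤ |(m : ℝ) - ((a : ℝ) + s₁)| := le_abs_self _
    have := min_le_right s₁ (1 - s₁)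
    linarith

/-- If `j + F` (with `F ∈ [0,1)`) is within `ρ/2` of `a + s₁` with `ρ ≤ s₁`, `ρ ≤ 1 - s₁`,
then `F` is within `ρ/2` of `s₁`. -/
lemma pin (a : ℤ) (j : ℕ) (F s₁ ρ : ℝ) (hF0 : 0 ≤ F) (hF1 : F < 1) (hρ : 0 < ρ)
    (hρs : ρ ≤ s₁) (hρs' : ρ ≤ 1 - s₁)
    (h : |((j : ℝ) + F) - ((a : ℝ) + s₁)| < ρ / 2) : |F - s₁| < ρ / 2 := by
  have hja : (j : ℤ) = a := by
    rcases abs_lt.mp h with ⟨h1, h2⟩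
    by_contra hne
    rcases lt_or_gt_of_ne hne with hlt | hgt
    · have : (j : ℝ) + 1 ≤ a := by exact_mod_cast hlt
      linarith
    · have : (a : ℝ) + 1 ≤ j := by exact_mod_cast hgt
      linarith
  have : ((j : ℝ)) = (a : ℝ) := by exact_mod_cast hja
  rw [this] at h
  convert h using 2
  ring

/-- A low-level (`k ≤ n`) plot coordinate cannot be `ρ/(2 pⁿ)`-close to `(a+s₁)/pⁿ`. -/
lemma coord_far (p : ℕ) (hp : 1 < p) (A : ℕ) {k n : ℕ} (hkn : k ≤ n) (a : ℤ) {s₁ ρ : ℝ}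
    (h0 : 0 < s₁) (h1 : s₁ < 1) (hρ : 0 < ρ) (hρs : ρ ≤ s₁) (hρs' : ρ ≤ 1 - s₁)
    (h : |(A : ℝ) / (p : ℝ) ^ k - ((a : ℝ) + s₁) / (p : ℝ) ^ n| < ρ / (2 * (p : ℝ) ^ n)) :
    False := by
  have hp0 : (0 : ℝ) < (p : ℝ) := by positivity
  have hPk : (0 : ℝ) < (p : ℝ) ^ k := by positivity
  have hPn : (0 : ℝ) < (p : ℝ) ^ n := by positivity
  have hsplit : (p : ℝ) ^ n = (p : ℝ) ^ (n - k) * (p : ℝ) ^ k := by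
    rw [← pow_add]; congr 1; omega
  have key : |((A * p ^ (n - k) : ℕ) : ℝ) - ((a : ℝ) + s₁)| < ρ / 2 := by
    have heq : ((A * p ^ (n - k) : ℕ) : ℝ) - ((a : ℝ) + s₁) =
        (p : ℝ) ^ n * ((A : ℝ) / (p : ℝ) ^ k - ((a : ℝ) + s₁) / (p : ℝ) ^ n) := by
      push_cast
      rw [hsplit]
      field_simp
    rw [heq, abs_mul, abs_of_pos hPn]
    calc (p:ℝ)^n * |(A : ℝ) / (p : ℝ) ^ k - ((a : ℝ) + s₁) / (p : ℝ) ^ n|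
        < (p:ℝ)^n * (ρ / (2 * (p : ℝ) ^ n)) := by
          exact mul_lt_mul_of_pos_left h hPn
      _ = ρ / 2 := by field_simp
  have := near_int a ((A * p ^ (n - k) : ℕ) : ℤ) s₁ h0 h1
  rw [Int.cast_natCast] at this
  have hmin : ρ ≤ min s₁ (1 - s₁) := le_min hρs hρs'
  linarith

/-- From a high-level (`k = m + n`) plot coordinate close to `(a+s₁)/pⁿ`, the level-`m`
coordinate (same `x`) is close to `s₁`, hence to `s`. -/
lemma coord_step (p : ℕ) [Fact p.Prime] (x : ℤ_[p]) {n m : ℕ} (a : ℤ) {s s₁ ρ ε : ℝ}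
    (h0 : 0 < s₁) (h1 : s₁ < 1) (hρ : 0 < ρ) (hρs : ρ ≤ s₁) (hρs' : ρ ≤ 1 - s₁)
    (hρε : ρ ≤ ε / 2) (hss₁ : |s₁ - s| < ε / 2)
    (h : |((x.appr (m + n) : ℕ) : ℝ) / (p : ℝ) ^ (m + n) - ((a : ℝ) + s₁) / (p : ℝ) ^ n|
      < ρ / (2 * (p : ℝ) ^ n)) :
    |((x.appr m : ℕ) : ℝ) / (p : ℝ) ^ m - s| < ε := by
  have hp : 1 < p := (Fact.out : p.Prime).one_lt
  have hp0 : (0 : ℝ) < (p : ℝ) := by positivity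
  have hPm : (0 : ℝ) < (p : ℝ) ^ m := by positivity
  have hPn : (0 : ℝ) < (p : ℝ) ^ n := by positivity
  obtain ⟨j, hj⟩ := x.dvd_appr_sub_appr m (m + n) (Nat.le_add_right m n)
  have hmono : x.appr m ≤ x.appr (m + n) := x.appr_mono (Nat.le_add_right m n)
  have hA : x.appr (m + n) = x.appr m + p ^ m * j := by omega
  have hF0 : (0 : ℝ) ≤ ((x.appr m : ℕ) : ℝ) / (p : ℝ) ^ m := by positivity
  have hF1 : ((x.appr m : ℕ) : ℝ) / (p : ℝ) ^ m < 1 := by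
    rw [div_lt_one hPm]
    exact_mod_cast x.appr_lt m
  have key : |((j : ℝ) + ((x.appr m : ℕ) : ℝ) / (p : ℝ) ^ m) - ((a : ℝ) + s₁)| < ρ / 2 := by
    have heq : ((j : ℝ) + ((x.appr m : ℕ) : ℝ) / (p : ℝ) ^ m) - ((a : ℝ) + s₁) =
        (p : ℝ) ^ n * (((x.appr (m + n) : ℕ) : ℝ) / (p : ℝ) ^ (m + n)
          - ((a : ℝ) + s₁) / (p : ℝ) ^ n) := by
      rw [hA]
      push_cast
      rw [pow_add]
      field_simp
      ring
    rw [heq, abs_mul, abs_of_pos hPn]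
    calc (p:ℝ)^n * |((x.appr (m + n) : ℕ) : ℝ) / (p : ℝ) ^ (m + n)
          - ((a : ℝ) + s₁) / (p : ℝ) ^ n|
        < (p:ℝ)^n * (ρ / (2 * (p : ℝ) ^ n)) := mul_lt_mul_of_pos_left h hPn
      _ = ρ / 2 := by field_simp
  have hpin := pin a j _ s₁ ρ hF0 hF1 hρ hρs hρs' key
  calc |((x.appr m : ℕ) : ℝ) / (p : ℝ) ^ m - s|
      ≤ |((x.appr m : ℕ) : ℝ) / (p : ℝ) ^ m - s₁| + |s₁ - s| := abs_sub_le _ _ _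
    _ < ρ / 2 + ε / 2 := by exact add_lt_add hpin hss₁
    _ ≤ ε := by linarith

theorem stmt_17 (p : ℕ) [Fact p.Prime] (f : ℤ_[p] → ℤ_[p])
    (hf : LipschitzWith 1 f) (u v u' v' : ℝ) (huv : u < v) (huv' : u' < v')
    (hsq : Set.Icc u v ×ˢ Set.Icc u' v' ⊆ closure (autPlot p f)) :
    closure (autPlot p f) = Set.Icc (0 : ℝ) 1 ×ˢ Set.Icc (0 : ℝ) 1 := by
  have hpnat : 1 < p := (Fact.out : p.Prime).one_lt
  have hp : (1 : ℝ) < (p : ℝ) := by exact_mod_cast hpnat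
  -- the plot lies in the unit square
  have hplot : autPlot p f ⊆ Set.Icc (0 : ℝ) 1 ×ˢ Set.Icc (0 : ℝ) 1 := by
    rintro q ⟨x, k, hk, rfl⟩
    have hPk : (0 : ℝ) < (p : ℝ) ^ k := by positivity
    simp only [Set.mem_prod, Set.mem_Icc]
    refine ⟨⟨by positivity, ?_⟩, by positivity, ?_⟩ <;>
      · rw [div_le_one hPk]
        exact le_of_lt (by exact_mod_cast PadicInt.appr_lt _ k)
  have hsub : closure (autPlot p f) ⊆ Set.Icc (0 : ℝ) 1 ×ˢ Set.Icc (0 : ℝ) 1 :=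
    closure_minimal hplot (isClosed_Icc.prod isClosed_Icc)
  -- the key density statement
  have key : Set.Ioo (0 : ℝ) 1 ×ˢ Set.Ioo (0 : ℝ) 1 ⊆ closure (autPlot p f) := by
    rintro ⟨s, t⟩ ⟨⟨hs0, hs1⟩, ⟨ht0, ht1⟩⟩
    rw [Metric.mem_closure_iff]
    intro ε hε
    -- choose the level n of magnification
    obtain ⟨n, hn⟩ := pow_unbounded_of_one_lt (max (2 / (v - u)) (2 / (v' - u'))) hp
    have hPn : (0 : ℝ) < (p : ℝ) ^ n := by positivity
    have hnv : 2 < (p : ℝ) ^ n * (v - u) := by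
      have h1 : 2 / (v - u) < (p : ℝ) ^ n := lt_of_le_of_lt (le_max_left _ _) hn
      rw [div_lt_iff₀ (by linarith)] at h1
      linarith [mul_comm ((p : ℝ) ^ n) (v - u)]
    have hnv' : 2 < (p : ℝ) ^ n * (v' - u') := by
      have h1 : 2 / (v' - u') < (p : ℝ) ^ n := lt_of_le_of_lt (le_max_right _ _) hn
      rw [div_lt_iff₀ (by linarith)] at h1
      linarith [mul_comm ((p : ℝ) ^ n) (v' - u')]
    set a : ℤ := ⌈(p : ℝ) ^ n * u⌉ with ha
    set b : ℤ := ⌈(p : ℝ) ^ n * u'⌉ with hb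
    have hau : (p : ℝ) ^ n * u ≤ a := Int.le_ceil _
    have hav : (a : ℝ) < (p : ℝ) ^ n * u + 1 := Int.ceil_lt_add_one _
    have hbu : (p : ℝ) ^ n * u' ≤ b := Int.le_ceil _
    have hbv : (b : ℝ) < (p : ℝ) ^ n * u' + 1 := Int.ceil_lt_add_one _
    -- the point of the given square that magnifies to (s, t)
    set ρ : ℝ := min (min s (1 - s)) (min (min t (1 - t)) (ε / 2)) with hρdef
    have hρ : 0 < ρ := by
      apply lt_min (lt_min hs0 (by linarith)) (lt_min (lt_min ht0 (by linarith)) (by linarith))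
    have hρs : ρ ≤ s := le_trans (min_le_left _ _) (min_le_left _ _)
    have hρs' : ρ ≤ 1 - s := le_trans (min_le_left _ _) (min_le_right _ _)
    have hρt : ρ ≤ t := le_trans (min_le_right _ _) (le_trans (min_le_left _ _) (min_le_left _ _))
    have hρt' : ρ ≤ 1 - t :=
      le_trans (min_le_right _ _) (le_trans (min_le_left _ _) (min_le_right _ _))
    have hρε : ρ ≤ ε / 2 := le_trans (min_le_right _ _) (min_le_right _ _)
    set δ : ℝ := ρ / (2 * (p : ℝ) ^ n) with hδdef
    have hδ : 0 < δ := by positivity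
    have hqmem : (((a : ℝ) + s) / (p : ℝ) ^ n, ((b : ℝ) + t) / (p : ℝ) ^ n) ∈
        Set.Icc u v ×ˢ Set.Icc u' v' := by
      simp only [Set.mem_prod, Set.mem_Icc]
      refine ⟨⟨?_, ?_⟩, ?_, ?_⟩
      · rw [le_div_iff₀ hPn]; nlinarith
      · rw [div_le_iff₀ hPn]; nlinarith
      · rw [le_div_iff₀ hPn]; nlinarith
      · rw [div_le_iff₀ hPn]; nlinarith
    obtain ⟨z, hz, hdz⟩ := Metric.mem_closure_iff.mp (hsq hqmem) δ hδ
    obtain ⟨x, k, hk1, rfl⟩ := hz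
    rw [Prod.dist_eq, max_lt_iff] at hdz
    obtain ⟨hd1, hd2⟩ := hdz
    rw [Real.dist_eq, abs_sub_comm] at hd1 hd2
    -- the approximating plot point must have high level
    have hkn : n < k := by
      by_contra hcon
      push_neg at hcon
      exact coord_far p hpnat (x.appr k) hcon a hs0 hs1 hρ hρs hρs' hd1
    set m : ℕ := k - n with hm
    have hk : k = m + n := by omega
    have hm1 : 1 ≤ m := by omega
    rw [hk] at hd1 hd2
    have hcoord1 := coord_step p x a hs0 hs1 hρ hρs hρs' hρε (by rw [sub_self, abs_zero]; linarith) hd1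
    have hcoord2 := coord_step p (f x) b ht0 ht1 hρ hρt hρt' hρε (by rw [sub_self, abs_zero]; linarith) hd2
    refine ⟨((x.appr m : ℝ) / (p : ℝ) ^ m, (((f x).appr m : ℕ) : ℝ) / (p : ℝ) ^ m),
      ⟨x, m, hm1, rfl⟩, ?_⟩
    rw [Prod.dist_eq, max_lt_iff]
    constructor <;> rw [Real.dist_eq, abs_sub_comm]
    · exact hcoord1
    · exact hcoord2
  apply subset_antisymm hsub
  have h2 : Set.Icc (0 : ℝ) 1 ×ˢ Set.Icc (0 : ℝ) 1 =
      closure (Set.Ioo (0 : ℝ) 1 ×ˢ Set.Ioo (0 : ℝ) 1) := by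
    rw [closure_prod_eq, closure_Ioo (by norm_num : (0 : ℝ) ≠ 1)]
  rw [h2]
  exact closure_minimal key isClosed_closure
end
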